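/- Vanishing cross-correlation of Tyler-normalized samples: Let p ≥ 2, let w_1, w_2 be independent random vectors uniformly distributed on the unit sphere S^{p-1} ⊂ ℝ^p, let Ω be a positive definite real symmetric p × p matrix, and set x_i = Ω^{1/2} w_i / ‖Ω^{1/2} w_i‖ for i = 1,2. Let (T_n) be a sequence of random positive definite p × p matrices on the same probability space with T_n → Ω almost surely (entrywise), and set t_{ni} = T_n^{-1/2} x_i / ‖T_n^{-1/2} x_i‖. Then the matrix of expectations E[t_{n1} t_{n2}ᵀ] converges to the zero p × p matrix as n → ∞. -/

import Mathlib

open Matrix MeasureTheory ProbabilityTheory Filter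

/-- The Euclidean norm of a vector in `ℝ^p`. -/
noncomputable def euclNorm {p : ℕ} (v : Fin p → ℝ) : ℝ :=
  Real.sqrt (∑ i, v i ^ 2)

/-- `μ` is the uniform probability measure on the unit sphere `S^{p-1} ⊂ ℝ^p`:
a probability measure concentrated on the unit sphere and invariant under every
orthogonal transformation. -/
def IsUniformOnSphere (p : ℕ) (μ : Measure (Fin p → ℝ)) : Prop :=
  IsProbabilityMeasure μ ∧ μ {w | euclNorm w = 1} = 1 ∧
    ∀ O : Matrix (Fin p) (Fin p) ℝ, Oᵀ * O = 1 →
      Measure.map (fun w => O *ᵥ w) μ = μ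

open scoped Classical

/-- The square root of a positive semidefinite matrix, as defined in Mathlib (Dec 2024)
under this name (removed since): `U * diag (√λ) * U⋆` with `U` the eigenvector unitary. -/
noncomputable def Matrix.PosSemidef.sqrt {n 𝕜 : Type*} [Fintype n] [RCLike 𝕜] [PartialOrder 𝕜] [DecidableEq n]
    {A : Matrix n n 𝕜} (hA : A.PosSemidef) : Matrix n n 𝕜 :=
  hA.1.eigenvectorUnitary.1 * diagonal ((↑) ∘ (√·) ∘ hA.1.eigenvalues) *
    (star hA.1.eigenvectorUnitary : Matrix n n 𝕜)

/-- For a positive definite matrix `T`, the map `v ↦ T^{-1/2} v / ‖T^{-1/2} v‖`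
(junk value `0` if `T` is not positive definite). -/
noncomputable def tylerNormalize {p : ℕ} (T : Matrix (Fin p) (Fin p) ℝ)
    (v : Fin p → ℝ) : Fin p → ℝ :=
  if h : T.PosDef then
    (euclNorm ((h.posSemidef.sqrt)⁻¹ *ᵥ v))⁻¹ • ((h.posSemidef.sqrt)⁻¹ *ᵥ v)
  else 0

/-!
Since `T n → Ω` and the square root is continuous on positive semidefinite matrices,
`(T n)^{-1/2} → Ω^{-1/2}` almost surely, so `tₙᵢ` tends to the normalization of
`Ω^{-1/2} xᵢ`, a positive multiple of `wᵢ`, i.e. to `wᵢ` itself. The `tₙᵢ` are unit vectors, so by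
dominated convergence `E[tₙ₁ₖ tₙ₂ₗ] → E[w₁ₖ w₂ₗ] = E[w₁ₖ] E[w₂ₗ]`, and `E[w₁ₖ] = 0` because the
uniform distribution is invariant under `w ↦ -w`.
-/

open Topology
open scoped MatrixOrder

section EuclNorm

variable {p : ℕ}

theorem euclNorm_eq_norm (v : Fin p → ℝ) :
    euclNorm v = ‖(WithLp.toLp 2 v : EuclideanSpace ℝ (Fin p))‖ := by
  simp [euclNorm, EuclideanSpace.norm_eq]

theorem continuous_euclNorm : Continuous (euclNorm (p := p)) := by
  simp_rw [funext euclNorm_eq_norm]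
  fun_prop

theorem euclNorm_eq_zero {v : Fin p → ℝ} : euclNorm v = 0 ↔ v = 0 := by
  simp [euclNorm_eq_norm]

theorem euclNorm_smul (c : ℝ) (v : Fin p → ℝ) : euclNorm (c • v) = |c| * euclNorm v := by
  simp [euclNorm_eq_norm, WithLp.toLp_smul, norm_smul]

theorem abs_apply_le_euclNorm (v : Fin p → ℝ) (i : Fin p) : |v i| ≤ euclNorm v := by
  simpa [euclNorm_eq_norm] using PiLp.norm_apply_le (WithLp.toLp 2 v : EuclideanSpace ℝ (Fin p)) i

noncomputable def euclNormalize (v : Fin p → ℝ) : Fin p → ℝ := (euclNorm v)⁻¹ • v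

theorem euclNormalize_smul_of_pos {c : ℝ} (hc : 0 < c) (v : Fin p → ℝ) :
    euclNormalize (c • v) = euclNormalize v := by
  rw [euclNormalize, euclNormalize, euclNorm_smul, abs_of_pos hc, smul_smul, mul_inv,
    mul_right_comm, inv_mul_cancel₀ hc.ne', one_mul]

theorem euclNormalize_of_euclNorm_eq_one {v : Fin p → ℝ} (hv : euclNorm v = 1) :
    euclNormalize v = v := by
  rw [euclNormalize, hv, inv_one, one_smul]

theorem abs_euclNormalize_apply_le_one (v : Fin p → ℝ) (i : Fin p) :
    |euclNormalize v i| ≤ 1 := by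
  have hv : 0 ≤ euclNorm v := Real.sqrt_nonneg _
  rw [euclNormalize, Pi.smul_apply, smul_eq_mul, abs_mul, abs_inv, abs_of_nonneg hv]
  exact inv_mul_le_one_of_le₀ (abs_apply_le_euclNorm v i) hv

theorem continuousAt_euclNormalize {v : Fin p → ℝ} (hv : v ≠ 0) :
    ContinuousAt euclNormalize v :=
  (continuous_euclNorm.continuousAt.inv₀ (euclNorm_eq_zero.not.mpr hv)).smul continuousAt_id

theorem measurable_euclNormalize : Measurable (euclNormalize (p := p)) :=
  continuous_euclNorm.measurable.inv.smul measurable_id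

end EuclNorm

theorem Matrix.mulVec_ne_zero_of_isUnit {n K : Type*} [Fintype n] [DecidableEq n] [Field K]
    {M : Matrix n n K} (hM : IsUnit M) {v : n → K} (hv : v ≠ 0) : M *ᵥ v ≠ 0 :=
  ((Matrix.mulVec_injective_iff_isUnit.mpr hM).ne_iff' (Matrix.mulVec_zero M)).mpr hv

section MatrixSqrt

variable {n : Type*} [Fintype n] [DecidableEq n]

theorem Matrix.PosSemidef.sqrt_eq_cfcSqrt {M : Matrix n n ℝ} (h : M.PosSemidef) :
    h.sqrt = CFC.sqrt M := by
  rw [CFC.sqrt_eq_cfc, cfc_nnreal_eq_real _ M, h.1.cfc_eq]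
  simp only [Matrix.PosSemidef.sqrt, IsHermitian.cfc, Unitary.conjStarAlgAut_apply]
  unfold Real.sqrt
  rfl

theorem Matrix.continuousOn_cfcSqrt :
    ContinuousOn (CFC.sqrt : Matrix n n ℝ → Matrix n n ℝ) {M | 0 ≤ M} := by
  -- the operator norm induces the usual topology and makes the CFC isometric
  open scoped Matrix.Norms.L2Operator in
  have := ContinuousOn.cfc_nnreal_of_mem_nhdsSet (A := Matrix n n ℝ) (s := Set.univ) NNReal.sqrt
    (t := {M : Matrix n n ℝ | 0 ≤ M}) univ_mem continuousOn_id (fun _ hM => hM)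
  exact this.congr fun _ _ => CFC.sqrt_eq_cfc

theorem Matrix.PosDef.isUnit_cfcSqrt {M : Matrix n n ℝ} (h : M.PosDef) :
    IsUnit (CFC.sqrt M) :=
  isUnit_of_mul_isUnit_left (x := CFC.sqrt M) (y := CFC.sqrt M)
    ((CFC.sqrt_mul_sqrt_self M h.posSemidef.nonneg).symm ▸ h.isUnit)

theorem Matrix.continuousOn_inv_cfcSqrt :
    ContinuousOn (fun M : Matrix n n ℝ => (CFC.sqrt M)⁻¹) {M | M.PosDef} := by
  intro M hM
  have hdet : IsUnit (CFC.sqrt M).det := (Matrix.isUnit_iff_isUnit_det _).mp hM.isUnit_cfcSqrt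
  refine ContinuousAt.comp_continuousWithinAt (continuousAt_matrix_inv _ ?_)
    (continuousOn_cfcSqrt.mono (fun N hN => hN.posSemidef.nonneg) M hM)
  rw [Ring.inverse_eq_inv']
  exact continuousAt_inv₀ hdet.ne_zero

end MatrixSqrt

section Tyler

variable {p : ℕ}

theorem tylerNormalize_eq {T : Matrix (Fin p) (Fin p) ℝ} (hT : T.PosDef) (v : Fin p → ℝ) :
    tylerNormalize T v = euclNormalize ((CFC.sqrt T)⁻¹ *ᵥ v) := by
  rw [tylerNormalize, dif_pos hT, hT.posSemidef.sqrt_eq_cfcSqrt, euclNormalize]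

theorem abs_tylerNormalize_apply_le_one (T : Matrix (Fin p) (Fin p) ℝ) (v : Fin p → ℝ)
    (i : Fin p) : |tylerNormalize T v i| ≤ 1 := by
  by_cases hT : T.PosDef
  · rw [tylerNormalize_eq hT]
    exact abs_euclNormalize_apply_le_one _ i
  · simp [tylerNormalize, hT]

theorem tylerNormalize_euclNormalize_sqrt_mulVec {A : Matrix (Fin p) (Fin p) ℝ} (hA : A.PosDef)
    {w : Fin p → ℝ} (hw : euclNorm w = 1) :
    tylerNormalize A (euclNormalize (hA.posSemidef.sqrt *ᵥ w)) = w := by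
  have hS : IsUnit (CFC.sqrt A) := hA.isUnit_cfcSqrt
  have hw0 : w ≠ 0 := by
    rintro rfl
    simp [euclNorm_eq_zero.mpr rfl] at hw
  have hSw : CFC.sqrt A *ᵥ w ≠ 0 := Matrix.mulVec_ne_zero_of_isUnit hS hw0
  have hc : 0 < (euclNorm (CFC.sqrt A *ᵥ w))⁻¹ :=
    inv_pos.mpr ((Real.sqrt_nonneg _).lt_of_ne' (euclNorm_eq_zero.not.mpr hSw))
  rw [tylerNormalize_eq hA, hA.posSemidef.sqrt_eq_cfcSqrt, euclNormalize.eq_1 (_ *ᵥ w),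
    Matrix.mulVec_smul, Matrix.mulVec_mulVec, Matrix.nonsing_inv_mul _ ((Matrix.isUnit_iff_isUnit_det _).mp hS),
    Matrix.one_mulVec, euclNormalize_smul_of_pos hc, euclNormalize_of_euclNorm_eq_one hw]

theorem Filter.Tendsto.tylerNormalize {ι : Type*} {l : Filter ι}
    {T : ι → Matrix (Fin p) (Fin p) ℝ} {A : Matrix (Fin p) (Fin p) ℝ}
    (h : Tendsto T l (𝓝 A)) (hT : ∀ i, (T i).PosDef) (hA : A.PosDef) (v : Fin p → ℝ) :
    Tendsto (fun i => tylerNormalize (T i) v) l (𝓝 (tylerNormalize A v)) := by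
  rcases eq_or_ne v 0 with rfl | hv
  · simp only [_root_.tylerNormalize, Matrix.mulVec_zero, smul_zero, dite_eq_ite, ite_self]
    exact tendsto_const_nhds
  have hinv : Tendsto (fun i => (CFC.sqrt (T i))⁻¹) l (𝓝 (CFC.sqrt A)⁻¹) :=
    (Matrix.continuousOn_inv_cfcSqrt A hA).tendsto.comp
      (tendsto_nhdsWithin_iff.mpr ⟨h, Eventually.of_forall hT⟩)
  have hne : (CFC.sqrt A)⁻¹ *ᵥ v ≠ 0 :=
    Matrix.mulVec_ne_zero_of_isUnit (Matrix.isUnit_nonsing_inv_iff.mpr hA.isUnit_cfcSqrt) hv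
  simp_rw [tylerNormalize_eq hA, tylerNormalize_eq (hT _)]
  exact (continuousAt_euclNormalize hne).tendsto.comp
    ((continuous_id.matrix_mulVec continuous_const).tendsto _ |>.comp hinv)

end Tyler

section Measurability

noncomputable instance Matrix.instMeasurableSpace {m n R : Type*} [MeasurableSpace R] :
    MeasurableSpace (Matrix m n R) :=
  inferInstanceAs (MeasurableSpace (m → n → R))

instance Matrix.instBorelSpace {m n R : Type*} [Countable m] [Countable n] [TopologicalSpace R]
    [MeasurableSpace R] [BorelSpace R] [SecondCountableTopology R] :
    BorelSpace (Matrix m n R) :=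
  inferInstanceAs (BorelSpace (m → n → R))

variable {α : Type*} [MeasurableSpace α] {p : ℕ}

theorem Measurable.tylerNormalize {T : α → Matrix (Fin p) (Fin p) ℝ} (hT : Measurable T)
    (hpd : ∀ a, (T a).PosDef) {x : α → Fin p → ℝ} (hx : Measurable x) :
    Measurable fun a => tylerNormalize (T a) (x a) := by
  have hinv : Measurable fun a => (CFC.sqrt (T a))⁻¹ :=
    Matrix.continuousOn_inv_cfcSqrt.domRestrict.measurable.comp (hT.subtype_mk (h := hpd))
  simp_rw [tylerNormalize_eq (hpd _)]
  exact measurable_euclNormalize.comp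
    ((continuous_fst.matrix_mulVec continuous_snd).measurable.comp (hinv.prodMk hx))

end Measurability

section UniformOnSphere

open MeasureTheory ProbabilityTheory

variable {p : ℕ} {μ : Measure (Fin p → ℝ)}

theorem IsUniformOnSphere.ae_euclNorm_eq_one (hμ : IsUniformOnSphere p μ) :
    ∀ᵐ v ∂μ, euclNorm v = 1 := by
  have : IsProbabilityMeasure μ := hμ.1
  have hsphere : MeasurableSet {v : Fin p → ℝ | euclNorm v = 1} :=
    (isClosed_eq continuous_euclNorm continuous_const).measurableSet
  rw [ae_iff_measure_eq hsphere.nullMeasurableSet, hμ.2.1, measure_univ]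

theorem IsUniformOnSphere.integral_apply_eq_zero (hμ : IsUniformOnSphere p μ) (i : Fin p) :
    ∫ v, v i ∂μ = 0 := by
  have hneg : Measure.map Neg.neg μ = μ := by
    simpa [Matrix.neg_mulVec] using hμ.2.2 (-1) (by simp)
  have : ∫ v, v i ∂μ = -∫ v, v i ∂μ := by
    conv_lhs => rw [← hneg]
    rw [integral_map (f := fun v : Fin p → ℝ => v i) measurable_neg.aemeasurable
      (measurable_pi_apply i).aestronglyMeasurable]
    simp only [Pi.neg_apply, integral_neg]
  linarith

theorem IsUniformOnSphere.integral_apply_mul_apply_eq_zero (hμ : IsUniformOnSphere p μ)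
    {Ω : Type*} [MeasurableSpace Ω] {P : Measure Ω} {w₁ w₂ : Ω → Fin p → ℝ}
    (hw₁ : Measurable w₁) (hw₂ : Measurable w₂) (hindep : IndepFun w₁ w₂ P)
    (hlaw : Measure.map w₁ P = μ) (k l : Fin p) :
    ∫ ω, w₁ ω k * w₂ ω l ∂P = 0 := by
  have hindep_kl : IndepFun (fun ω => w₁ ω k) (fun ω => w₂ ω l) P :=
    hindep.comp (measurable_pi_apply k) (measurable_pi_apply l)
  rw [hindep_kl.integral_fun_mul_eq_mul_integral
      ((measurable_pi_apply k).comp hw₁).aestronglyMeasurable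
      ((measurable_pi_apply l).comp hw₂).aestronglyMeasurable,
    ← integral_map hw₁.aemeasurable (measurable_pi_apply k).aestronglyMeasurable, hlaw,
    hμ.integral_apply_eq_zero, zero_mul]

theorem IsUniformOnSphere.ae_tendsto_tylerNormalize (hμ : IsUniformOnSphere p μ)
    {Ω : Type*} [MeasurableSpace Ω] {P : Measure Ω} {A : Matrix (Fin p) (Fin p) ℝ}
    (hA : A.PosDef) {w x : Ω → Fin p → ℝ} (hw : Measurable w) (hlaw : Measure.map w P = μ)
    (hx : ∀ ω, x ω = euclNormalize (hA.posSemidef.sqrt *ᵥ w ω))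
    {T : ℕ → Ω → Matrix (Fin p) (Fin p) ℝ} (hTpd : ∀ n ω, (T n ω).PosDef)
    (hTlim : ∀ᵐ ω ∂P, Tendsto (T · ω) atTop (𝓝 A)) :
    ∀ᵐ ω ∂P, Tendsto (fun n => tylerNormalize (T n ω) (x ω)) atTop (𝓝 (w ω)) := by
  filter_upwards [ae_of_ae_map hw.aemeasurable (hlaw ▸ hμ.ae_euclNorm_eq_one), hTlim]
    with ω hω hTω
  simpa only [hx, tylerNormalize_euclNormalize_sqrt_mulVec hA hω] using
    hTω.tylerNormalize (hTpd · ω) hA (x ω)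

end UniformOnSphere

theorem tyler_cross_correlation_vanishes_general (p : ℕ)
    {α : Type*} [MeasurableSpace α] (P : Measure α) [IsProbabilityMeasure P]
    (μ : Measure (Fin p → ℝ)) (hμ : IsUniformOnSphere p μ)
    (w₁ w₂ : α → Fin p → ℝ)
    (hw₁meas : Measurable w₁) (hw₂meas : Measurable w₂)
    (hindep : IndepFun w₁ w₂ P)
    (hw₁law : Measure.map w₁ P = μ) (hw₂law : Measure.map w₂ P = μ)
    (A : Matrix (Fin p) (Fin p) ℝ) (hA : A.PosDef)
    (x₁ x₂ : α → Fin p → ℝ)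
    (hx₁ : ∀ ω, x₁ ω = (euclNorm (hA.posSemidef.sqrt *ᵥ w₁ ω))⁻¹ • (hA.posSemidef.sqrt *ᵥ w₁ ω))
    (hx₂ : ∀ ω, x₂ ω = (euclNorm (hA.posSemidef.sqrt *ᵥ w₂ ω))⁻¹ • (hA.posSemidef.sqrt *ᵥ w₂ ω))
    (T : ℕ → α → Matrix (Fin p) (Fin p) ℝ)
    (hTmeas : ∀ n i j, Measurable fun ω => T n ω i j)
    (hTpd : ∀ n ω, (T n ω).PosDef)
    (hTconv : ∀ᵐ ω ∂P, ∀ i j, Tendsto (fun n => T n ω i j) atTop (nhds (A i j)))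
    (t₁ t₂ : ℕ → α → Fin p → ℝ)
    (ht₁ : ∀ n ω, t₁ n ω = tylerNormalize (T n ω) (x₁ ω))
    (ht₂ : ∀ n ω, t₂ n ω = tylerNormalize (T n ω) (x₂ ω)) :
    ∀ k l : Fin p,
      Tendsto (fun n => ∫ ω, t₁ n ω k * t₂ n ω l ∂P) atTop (nhds 0) := by
  intro k l
  have hT : ∀ n, Measurable (T n) := fun n =>
    measurable_pi_lambda _ fun i => measurable_pi_lambda _ (hTmeas n i)
  have hTlim : ∀ᵐ ω ∂P, Tendsto (T · ω) atTop (𝓝 A) := hTconv.mono fun ω hω =>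
    tendsto_pi_nhds.mpr fun i => tendsto_pi_nhds.mpr (hω i)
  have hx_meas : ∀ {w x : α → Fin p → ℝ}, Measurable w →
      (∀ ω, x ω = euclNormalize (hA.posSemidef.sqrt *ᵥ w ω)) → Measurable x := fun hw hx =>
    funext hx ▸ measurable_euclNormalize.comp
      ((continuous_const.matrix_mulVec continuous_id).measurable.comp hw)
  have hF : ∀ n, AEStronglyMeasurable (fun ω => t₁ n ω k * t₂ n ω l) P := fun n => by
    simp_rw [ht₁, ht₂]
    exact (((hT n).tylerNormalize (hTpd n) (hx_meas hw₁meas hx₁)).eval.mul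
      ((hT n).tylerNormalize (hTpd n) (hx_meas hw₂meas hx₂)).eval).aestronglyMeasurable
  have hbound : ∀ n, ∀ᵐ ω ∂P, ‖t₁ n ω k * t₂ n ω l‖ ≤ 1 := fun n => .of_forall fun ω => by
    rw [norm_mul, Real.norm_eq_abs, Real.norm_eq_abs, ht₁, ht₂]
    exact mul_le_one₀ (abs_tylerNormalize_apply_le_one _ _ _) (abs_nonneg _)
      (abs_tylerNormalize_apply_le_one _ _ _)
  have hlim : ∀ᵐ ω ∂P, Tendsto (fun n => t₁ n ω k * t₂ n ω l) atTop (𝓝 (w₁ ω k * w₂ ω l)) := by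
    filter_upwards [hμ.ae_tendsto_tylerNormalize hA hw₁meas hw₁law hx₁ hTpd hTlim,
      hμ.ae_tendsto_tylerNormalize hA hw₂meas hw₂law hx₂ hTpd hTlim] with ω h₁ h₂
    simp_rw [ht₁, ht₂]
    exact (tendsto_pi_nhds.mp h₁ k).mul (tendsto_pi_nhds.mp h₂ l)
  simpa [hμ.integral_apply_mul_apply_eq_zero hw₁meas hw₂meas hindep hw₁law] using
    tendsto_integral_of_dominated_convergence _ hF (integrable_const 1) hbound hlim

/-- **Vanishing cross-correlation of Tyler-normalized samples.**  With `w₁, w₂` independent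
uniform on `S^{p-1}`, `xᵢ = Ω^{1/2} wᵢ / ‖Ω^{1/2} wᵢ‖`, and `T n` random positive definite
matrices converging a.s. entrywise to `Ω`, the expectation matrix `E[tₙ₁ tₙ₂ᵀ]` of the
normalized vectors `tₙᵢ = (T n)^{-1/2} xᵢ / ‖(T n)^{-1/2} xᵢ‖` converges to zero. -/
theorem tyler_cross_correlation_vanishes (p : ℕ) (hp : 2 ≤ p)
    {α : Type*} [MeasurableSpace α] (P : Measure α) [IsProbabilityMeasure P]
    (μ : Measure (Fin p → ℝ)) (hμ : IsUniformOnSphere p μ)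
    (w₁ w₂ : α → Fin p → ℝ)
    (hw₁meas : Measurable w₁) (hw₂meas : Measurable w₂)
    (hindep : IndepFun w₁ w₂ P)
    (hw₁law : Measure.map w₁ P = μ) (hw₂law : Measure.map w₂ P = μ)
    (A : Matrix (Fin p) (Fin p) ℝ) (hA : A.PosDef)
    (x₁ x₂ : α → Fin p → ℝ)
    (hx₁ : ∀ ω, x₁ ω = (euclNorm (hA.posSemidef.sqrt *ᵥ w₁ ω))⁻¹ • (hA.posSemidef.sqrt *ᵥ w₁ ω))
    (hx₂ : ∀ ω, x₂ ω = (euclNorm (hA.posSemidef.sqrt *ᵥ w₂ ω))⁻¹ • (hA.posSemidef.sqrt *ᵥ w₂ ω))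
    (T : ℕ → α → Matrix (Fin p) (Fin p) ℝ)
    (hTmeas : ∀ n i j, Measurable fun ω => T n ω i j)
    (hTpd : ∀ n ω, (T n ω).PosDef)
    (hTconv : ∀ᵐ ω ∂P, ∀ i j, Tendsto (fun n => T n ω i j) atTop (nhds (A i j)))
    (t₁ t₂ : ℕ → α → Fin p → ℝ)
    (ht₁ : ∀ n ω, t₁ n ω = tylerNormalize (T n ω) (x₁ ω))
    (ht₂ : ∀ n ω, t₂ n ω = tylerNormalize (T n ω) (x₂ ω)) :
    ∀ k l : Fin p,
      Tendsto (fun n => ∫ ω, t₁ n ω k * t₂ n ω l ∂P) atTop (nhds 0) :=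
  tyler_cross_correlation_vanishes_general p P μ hμ w₁ w₂ hw₁meas hw₂meas hindep hw₁law hw₂law A hA
    x₁ x₂ hx₁ hx₂ T hTmeas hTpd hTconv t₁ t₂ ht₁ ht₂
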